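/- Let P be a directed family of sequences p with p_i ≥ 1, and A(P) the Köthe algebra λ(P) with multiplication e_i e_j = e_{min(i,j)}. Suppose A(P) has a bounded approximate identity. Then there exists a bounded sequence (x_n) in A(P) such that ℓ(x_n) → ∞ and inf_n w(x_n) > 0, where w(a) = ∑_i |a_i| and ℓ(a) = min{k : a_k ≠ 0} for a ≠ 0. -/

import Mathlib

/-!
For nonempty `P` fix `p ∈ P` and put `d_n = e_n - e_{n+1}`. Since `e_i e_j = e_{min(i,j)}`,
`d_n e_j` is `d_n` for `j > n` and `0` otherwise, so by `‖·‖_p`-continuity of `b ↦ (d_n b)_n`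
and density of the finitely supported sequences, `(d_n b)_n = ∑_{j > n} b_j`. Choosing `u_n` in the
bounded approximate identity with `‖d_n - d_n u_n‖_p < 1/2` gives `|1 - ∑_{j > n} u_{n,j}| < 1/2`,
so the tails `x_n = (u_{n,j})_{j > n}` are bounded, vanish below `n + 1` and have `w(x_n) ≥ 1/2`.
For `P = ∅` the unit vectors already work.
-/

/-- The Köthe sequence space `λ(P)` as a subspace of `ℕ → ℂ`. -/
noncomputable def kothe (P : Set (ℕ → ℝ)) (hP : ∀ p ∈ P, ∀ i, (1 : ℝ) ≤ p i) :
    Submodule ℂ (ℕ → ℂ) where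
  carrier := {a | ∀ p ∈ P, Summable fun i => ‖a i‖ * p i}
  zero_mem' := by intro p hp; simpa using summable_zero
  add_mem' := by
    intro a b ha hb p hp
    refine Summable.of_nonneg_of_le
      (fun i => mul_nonneg (norm_nonneg _)
        (le_trans zero_le_one (hP p hp i))) (fun i => ?_) ((ha p hp).add (hb p hp))
    have := mul_le_mul_of_nonneg_right (norm_add_le ((a : ℕ → ℂ) i) (b i))
      (le_trans zero_le_one (hP p hp i))
    simpa [add_mul] using this
  smul_mem' := by
    intro c a ha p hp
    have := (ha p hp).mul_left ‖c‖
    refine this.congr fun i => ?_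
    simp [norm_smul, mul_assoc]

/-- The `i`-th standard unit vector as an element of `λ(P)`. -/
noncomputable def kotheE (P : Set (ℕ → ℝ)) (hP : ∀ p ∈ P, ∀ i, (1 : ℝ) ≤ p i)
    (i : ℕ) : kothe P hP :=
  ⟨Pi.single i 1, by
    intro p hp
    refine summable_of_ne_finset_zero (s := {i}) fun j hj => ?_
    rw [Pi.single_eq_of_ne (by simpa using hj)]
    simp⟩

/-- The seminorm `‖a‖_p = ∑ᵢ |aᵢ| pᵢ` (as a real-valued expression). -/
noncomputable def kNorm (p : ℕ → ℝ) (a : ℕ → ℂ) : ℝ := ∑' i, ‖a i‖ * p i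

open Filter
open Topology

section Weighted

variable {p : ℕ → ℝ} {a : ℕ → ℂ}

theorem norm_le_kNorm (hp : ∀ i, 1 ≤ p i) (ha : Summable fun i => ‖a i‖ * p i) (k : ℕ) :
    ‖a k‖ ≤ kNorm p a :=
  (le_mul_of_one_le_right (norm_nonneg _) (hp k)).trans <|
    ha.le_tsum k fun j _ => mul_nonneg (norm_nonneg _) (zero_le_one.trans (hp j))

theorem summable_norm_of_summable_weighted (hp : ∀ i, 1 ≤ p i)
    (ha : Summable fun i => ‖a i‖ * p i) : Summable fun i => ‖a i‖ :=
  ha.of_nonneg_of_le (fun _ => norm_nonneg _) fun i => le_mul_of_one_le_right (norm_nonneg _) (hp i)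

theorem norm_indicator_mul (s : Set ℕ) (i : ℕ) :
    ‖s.indicator a i‖ * p i = s.indicator (fun j => ‖a j‖ * p j) i := by
  rw [norm_indicator_eq_indicator_norm, Set.indicator_mul_left]

theorem kNorm_indicator_le (hp : ∀ i, 0 ≤ p i) (ha : Summable fun i => ‖a i‖ * p i)
    (s : Set ℕ) : kNorm p (s.indicator a) ≤ kNorm p a := by
  simp only [kNorm, norm_indicator_mul]
  exact (ha.indicator s).tsum_le_tsum
    (Set.indicator_le_self' fun i _ => mul_nonneg (norm_nonneg _) (hp i)) ha

theorem tendsto_kNorm_indicator_compl_range :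
    Tendsto (fun m => kNorm p ((↑(Finset.range m) : Set ℕ)ᶜ.indicator a)) atTop (𝓝 0) := by
  simp only [kNorm, norm_indicator_mul, ← tsum_subtype]
  exact (tendsto_tsum_compl_atTop_zero fun i => ‖a i‖ * p i).comp tendsto_finset_range

end Weighted

section Kothe

variable {P : Set (ℕ → ℝ)} {hP : ∀ p ∈ P, ∀ i, (1 : ℝ) ≤ p i}

@[simp]
theorem coe_kotheE (i : ℕ) : (kotheE P hP i : ℕ → ℂ) = Pi.single i 1 := rfl

theorem tsum_norm_kotheE (i : ℕ) : ∑' k, ‖(kotheE P hP i : ℕ → ℂ) k‖ = 1 := by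
  rw [tsum_eq_single i fun k hk => by simp [Pi.single_eq_of_ne hk]]
  simp

theorem kNorm_kotheE (p : ℕ → ℝ) (i : ℕ) : kNorm p (kotheE P hP i : ℕ → ℂ) = p i := by
  rw [kNorm, tsum_eq_single i fun k hk => by simp [Pi.single_eq_of_ne hk]]
  simp

theorem indicator_mem_kothe {a : ℕ → ℂ} (ha : a ∈ kothe P hP) (s : Set ℕ) :
    s.indicator a ∈ kothe P hP := by
  intro p hp
  simp only [norm_indicator_mul]
  exact (ha p hp).indicator s

theorem coe_sum_range_smul_kotheE (b : ℕ → ℂ) (m : ℕ) :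
    ((∑ j ∈ Finset.range m, b j • kotheE P hP j : kothe P hP) : ℕ → ℂ) =
      (↑(Finset.range m) : Set ℕ).indicator b := by
  ext k
  simp [Finset.sum_apply, Set.indicator_apply, Pi.single_apply]

theorem eq_tsum_of_norm_le_kNorm {p : ℕ → ℝ} (hp : p ∈ P) (f : kothe P hP →ₗ[ℂ] ℂ) (C : ℝ)
    (hf : ∀ b : kothe P hP, ‖f b‖ ≤ C * kNorm p b) (b : kothe P hP) :
    f b = ∑' j, (b : ℕ → ℂ) j * f (kotheE P hP j) := by
  set s : ℕ → kothe P hP := fun m => ∑ j ∈ Finset.range m, (b : ℕ → ℂ) j • kotheE P hP j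
  have hfs : ∀ m, f (s m) = ∑ j ∈ Finset.range m, (b : ℕ → ℂ) j * f (kotheE P hP j) := by
    intro m
    simp [s, map_sum, map_smul]
  have hsummable : Summable fun j => (b : ℕ → ℂ) j * f (kotheE P hP j) := by
    refine ((b.2 p hp).mul_left C).of_norm_bounded fun j => ?_
    calc ‖(b : ℕ → ℂ) j * f (kotheE P hP j)‖
        ≤ ‖(b : ℕ → ℂ) j‖ * (C * p j) := by
          rw [norm_mul, ← kNorm_kotheE (P := P) (hP := hP) p j]
          exact mul_le_mul_of_nonneg_left (hf _) (norm_nonneg _)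
      _ = C * (‖(b : ℕ → ℂ) j‖ * p j) := by ring
  have hpartial :
      Tendsto (fun m => f (s m)) atTop (𝓝 (∑' j, (b : ℕ → ℂ) j * f (kotheE P hP j))) := by
    simpa only [hfs] using hsummable.hasSum.tendsto_sum_nat
  have hlim : Tendsto (fun m => f (s m)) atTop (𝓝 (f b)) := by
    rw [tendsto_iff_norm_sub_tendsto_zero]
    refine squeeze_zero (fun _ => norm_nonneg _) (fun m => ?_)
      (by simpa only [mul_zero] using
        (tendsto_kNorm_indicator_compl_range (p := p) (a := b)).const_mul C)
    have hcoe :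
        ((b - s m : kothe P hP) : ℕ → ℂ) = (↑(Finset.range m) : Set ℕ)ᶜ.indicator b := by
      rw [Set.indicator_compl, Submodule.coe_sub, coe_sum_range_smul_kotheE]
    rw [norm_sub_rev, ← map_sub, ← hcoe]
    exact hf _
  exact tendsto_nhds_unique hlim hpartial

variable (P hP) in
noncomputable def kotheDiff (n : ℕ) : kothe P hP := kotheE P hP n - kotheE P hP (n + 1)

@[simp]
theorem kotheDiff_apply_self (n : ℕ) : (kotheDiff P hP n : ℕ → ℂ) n = 1 := by
  simp [kotheDiff]

variable (M : kothe P hP →ₗ[ℂ] kothe P hP →ₗ[ℂ] kothe P hP)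

theorem mul_kotheDiff_kotheE
    (hMe : ∀ i j : ℕ, M (kotheE P hP i) (kotheE P hP j) = kotheE P hP (min i j)) (n j : ℕ) :
    M (kotheDiff P hP n) (kotheE P hP j) = if n < j then kotheDiff P hP n else 0 := by
  simp only [kotheDiff, map_sub, LinearMap.sub_apply, hMe]
  split_ifs with h
  · rw [min_eq_left h.le, min_eq_left h]
  · rw [min_eq_right (not_lt.1 h), min_eq_right (by omega), sub_self]

theorem mul_kotheDiff_apply_self {p : ℕ → ℝ} (hp : p ∈ P)
    (hMe : ∀ i j : ℕ, M (kotheE P hP i) (kotheE P hP j) = kotheE P hP (min i j))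
    (hMsub : ∀ a b : kothe P hP,
      kNorm p (M a b : ℕ → ℂ) ≤ kNorm p (a : ℕ → ℂ) * kNorm p (b : ℕ → ℂ))
    (n : ℕ) (b : kothe P hP) :
    (M (kotheDiff P hP n) b : ℕ → ℂ) n = ∑' j, (Set.Ioi n).indicator b j := by
  let f : kothe P hP →ₗ[ℂ] ℂ :=
    (LinearMap.proj n).comp ((kothe P hP).subtype.comp (M (kotheDiff P hP n)))
  have hf : ∀ c, ‖f c‖ ≤ kNorm p (kotheDiff P hP n) * kNorm p c := fun c =>
    (norm_le_kNorm (hP p hp) ((M (kotheDiff P hP n) c).2 p hp) n).trans (hMsub _ c)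
  refine (eq_tsum_of_norm_le_kNorm hp f _ hf b).trans (tsum_congr fun j => ?_)
  by_cases h : n < j <;> simp [f, mul_kotheDiff_kotheE M hMe, h]

theorem one_sub_kNorm_le_tsum_norm_indicator_Ioi {p : ℕ → ℝ} (hp : p ∈ P)
    (hMe : ∀ i j : ℕ, M (kotheE P hP i) (kotheE P hP j) = kotheE P hP (min i j))
    (hMsub : ∀ a b : kothe P hP,
      kNorm p (M a b : ℕ → ℂ) ≤ kNorm p (a : ℕ → ℂ) * kNorm p (b : ℕ → ℂ))
    (n : ℕ) (v : kothe P hP) :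
    1 - kNorm p (kotheDiff P hP n - M (kotheDiff P hP n) v : kothe P hP) ≤
      ∑' k, ‖(Set.Ioi n).indicator (v : ℕ → ℂ) k‖ := by
  set S := ∑' j, (Set.Ioi n).indicator (v : ℕ → ℂ) j
  have hcoord : ‖1 - S‖ ≤ kNorm p (kotheDiff P hP n - M (kotheDiff P hP n) v : kothe P hP) := by
    simpa [S, mul_kotheDiff_apply_self M hp hMe hMsub] using
      norm_le_kNorm (hP p hp) ((kotheDiff P hP n - M (kotheDiff P hP n) v).2 p hp) n
  have hS : ‖S‖ ≤ ∑' k, ‖(Set.Ioi n).indicator (v : ℕ → ℂ) k‖ :=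
    norm_tsum_le_tsum_norm <|
      summable_norm_of_summable_weighted (hP p hp) (indicator_mem_kothe v.2 _ p hp)
  have := norm_sub_norm_le (1 : ℂ) S
  rw [norm_one] at this
  linarith

end Kothe

theorem stmt14_general (P : Set (ℕ → ℝ)) (hP : ∀ p ∈ P, ∀ i, (1 : ℝ) ≤ p i)
    (M : kothe P hP →ₗ[ℂ] kothe P hP →ₗ[ℂ] kothe P hP)
    (hMe : ∀ i j : ℕ, M (kotheE P hP i) (kotheE P hP j) = kotheE P hP (min i j))
    (hMsub : ∀ p ∈ P, ∀ a b : kothe P hP,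
      kNorm p (M a b : ℕ → ℂ) ≤ kNorm p (a : ℕ → ℂ) * kNorm p (b : ℕ → ℂ))
    -- `A(P)` has a bounded approximate identity:
    (hbai : ∃ (ι : Type) (pr : Preorder ι),
      (∀ x y : ι, ∃ z, pr.le x z ∧ pr.le y z) ∧ Nonempty ι ∧
      ∃ u : ι → kothe P hP,
        (∀ p ∈ P, ∃ C : ℝ, ∀ i, kNorm p (u i : ℕ → ℂ) ≤ C) ∧
        ∀ a : kothe P hP, ∀ p ∈ P,
          Tendsto (fun i => kNorm p ((a - M a (u i) : kothe P hP) : ℕ → ℂ))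
            (@Filter.atTop ι pr) (nhds 0)) :
    ∃ x : ℕ → kothe P hP,
      -- boundedness in each seminorm
      (∀ p ∈ P, ∃ C : ℝ, ∀ n, kNorm p (x n : ℕ → ℂ) ≤ C) ∧
      -- `ℓ(x_n) → ∞`
      (∀ N : ℕ, ∃ N₀ : ℕ, ∀ n ≥ N₀, ∀ k < N, (x n : ℕ → ℂ) k = 0) ∧
      -- `inf_n w(x_n) > 0`
      (∃ δ > (0 : ℝ), ∀ n, δ ≤ ∑' k, ‖(x n : ℕ → ℂ) k‖) := by
  rcases P.eq_empty_or_nonempty with rfl | ⟨p, hp⟩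
  · refine ⟨kotheE ∅ hP, fun p hp => hp.elim, fun N => ⟨N, fun n hn k hk => ?_⟩,
      ⟨1, one_pos, fun n => (tsum_norm_kotheE n).ge⟩⟩
    simp [Pi.single_eq_of_ne (show k ≠ n by omega)]
  obtain ⟨ι, pr, hdirected, hne, u, hubd, happrox⟩ := hbai
  let _ := pr
  have : IsDirected ι (· ≤ ·) := ⟨hdirected⟩
  have hclose : ∀ n, ∃ i,
      kNorm p (kotheDiff P hP n - M (kotheDiff P hP n) (u i) : kothe P hP) < 1 / 2 :=
    fun n => ((happrox _ p hp).eventually (gt_mem_nhds one_half_pos)).exists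
  choose i hi using hclose
  refine ⟨fun n => ⟨_, indicator_mem_kothe (u (i n)).2 (Set.Ioi n)⟩, fun q hq => ?_,
    fun N => ⟨N, fun n hn k hk => Set.indicator_of_notMem (Set.notMem_Ioi.2 (by omega)) _⟩,
    ⟨1 / 2, one_half_pos, fun n => ?_⟩⟩
  · obtain ⟨C, hC⟩ := hubd q hq
    exact ⟨C, fun n => (kNorm_indicator_le (fun j => zero_le_one.trans (hP q hq j))
      ((u (i n)).2 q hq) _).trans (hC (i n))⟩
  · linarith [hi n, one_sub_kNorm_le_tsum_norm_indicator_Ioi M hp hMe (hMsub p hp) n (u (i n))]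

/-- If the Köthe algebra `A(P)` has a bounded approximate identity, then there is a
bounded sequence `(x_n)` in `λ(P)` with `ℓ(x_n) → ∞` and `inf_n w(x_n) > 0`. -/
theorem stmt14 (P : Set (ℕ → ℝ)) (hP : ∀ p ∈ P, ∀ i, (1 : ℝ) ≤ p i)
    (hdir : ∀ p ∈ P, ∀ q ∈ P, ∃ r ∈ P, ∀ i, max (p i) (q i) ≤ r i)
    (M : kothe P hP →ₗ[ℂ] kothe P hP →ₗ[ℂ] kothe P hP)
    (hMe : ∀ i j : ℕ, M (kotheE P hP i) (kotheE P hP j) = kotheE P hP (min i j))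
    (hMsub : ∀ p ∈ P, ∀ a b : kothe P hP,
      kNorm p (M a b : ℕ → ℂ) ≤ kNorm p (a : ℕ → ℂ) * kNorm p (b : ℕ → ℂ))
    -- `A(P)` has a bounded approximate identity:
    (hbai : ∃ (ι : Type) (pr : Preorder ι),
      (∀ x y : ι, ∃ z, pr.le x z ∧ pr.le y z) ∧ Nonempty ι ∧
      ∃ u : ι → kothe P hP,
        (∀ p ∈ P, ∃ C : ℝ, ∀ i, kNorm p (u i : ℕ → ℂ) ≤ C) ∧
        ∀ a : kothe P hP, ∀ p ∈ P,
          Tendsto (fun i => kNorm p ((a - M a (u i) : kothe P hP) : ℕ → ℂ))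
            (@Filter.atTop ι pr) (nhds 0)) :
    ∃ x : ℕ → kothe P hP,
      -- boundedness in each seminorm
      (∀ p ∈ P, ∃ C : ℝ, ∀ n, kNorm p (x n : ℕ → ℂ) ≤ C) ∧
      -- `ℓ(x_n) → ∞`
      (∀ N : ℕ, ∃ N₀ : ℕ, ∀ n ≥ N₀, ∀ k < N, (x n : ℕ → ℂ) k = 0) ∧
      -- `inf_n w(x_n) > 0`
      (∃ δ > (0 : ℝ), ∀ n, δ ≤ ∑' k, ‖(x n : ℕ → ℂ) k‖) :=
  stmt14_general P hP M hMe hMsub hbai
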